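/- arXiv:2212.09364 — 4 statements merged into one kernel-verified Lean document; each statement's English description precedes it below -/
import Mathlib

section
/- Let W be a (k+1)-dimensional subspace of the space of homogeneous polynomials of degree d in n+1 variables, let w be a linear monomial weight function with induced valuation ω, and let f₁ ∈ W be nonzero. Then there exist f₂,...,f_{k+1} ∈ W such that f₁,...,f_{k+1} is a basis of W, and there exist exponent tuples I₁,...,I_{k+1} with the coefficient matrix (f^j_{I_i}) upper triangular with nonzero diagonal (hence Plücker coordinate M_{I₁...I_{k+1}} ≠ 0) and ω(f_j) = w(I_j) for every j. -/
/-!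
Take an exponent I₁ of f₁ of minimal weight, so that ω(f₁) = w(I₁) and f₁ has a nonzero
coefficient at I₁. The forms in W whose coefficient at I₁ vanishes make up a hyperplane of W, and
repeating the construction inside it produces f₂, …, f_{k+1} whose coefficient matrix
(f^j_{I_i}) is triangular with nonzero diagonal. Its determinant, the Plücker coordinate
M_{I₁…I_{k+1}}, is then nonzero, so the f_j are independent and, by dimension count, a basis of W.
-/

open MvPolynomial

/-- The linear weight of an exponent vector: w(I) = Σ_l c_l · i_l. -/
def wt {n : ℕ} (c : Fin n → ℤ) (I : Fin n →₀ ℕ) : ℤ := ∑ l, c l * (I l : ℤ)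

/-- ω(f) = min of w over exponent vectors of monomials with nonzero coefficient
(junk value 0 for f = 0). -/
noncomputable def omega {K : Type*} [CommSemiring K] {n : ℕ} (c : Fin n → ℤ)
    (f : MvPolynomial (Fin n) K) : ℤ :=
  WithTop.untopD 0 ((f.support.image (wt c)).min)

open Module

lemma exists_mem_support_omega_eq {K : Type*} [CommSemiring K] {n : ℕ} (c : Fin n → ℤ)
    {f : MvPolynomial (Fin n) K} (hf : f ≠ 0) : ∃ I ∈ f.support, omega c f = wt c I := by
  obtain ⟨m, hm⟩ := Finset.min_of_nonempty ((support_nonempty.2 hf).image (wt c))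
  obtain ⟨I, hI, rfl⟩ := Finset.mem_image.1 (Finset.mem_of_min hm)
  exact ⟨I, hI, by rw [omega, hm]; rfl⟩

section Triangular

variable {K V ι : Type*} [Field K] [AddCommGroup V] [Module K V]

lemma Submodule.finrank_inf_ker_add_one {W : Submodule K V} [FiniteDimensional K W]
    {φ : Dual K V} {v : V} (hv : v ∈ W) (hφv : φ v ≠ 0) :
    finrank K ↥(W ⊓ LinearMap.ker φ) + 1 = finrank K W := by
  have hψ : φ.domRestrict W ≠ 0 := fun h => hφv (LinearMap.congr_fun h ⟨v, hv⟩)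
  have hmap : (LinearMap.ker (φ.domRestrict W)).map W.subtype = W ⊓ LinearMap.ker φ := by
    rw [LinearMap.ker_domRestrict, Submodule.map_comap_subtype]
  rw [← Dual.finrank_ker_add_one_of_ne_zero hψ, ← hmap, Submodule.finrank_map_subtype_eq]

theorem exists_triangular_family (φ : ι → Dual K V) (P : V → ι → Prop)
    (hP : ∀ u ≠ 0, ∃ i, P u i ∧ φ i u ≠ 0) (k : ℕ) {W : Submodule K V}
    (hW : finrank K W = k + 1) {v : V} (hv : v ∈ W) (hv0 : v ≠ 0) :
    ∃ (f : Fin (k+1) → V) (I : Fin (k+1) → ι), f 0 = v ∧ (∀ j, f j ∈ W) ∧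
      (∀ i j, i < j → φ (I i) (f j) = 0) ∧ (∀ j, φ (I j) (f j) ≠ 0) ∧
      ∀ j, P (f j) (I j) := by
  induction k generalizing W v with
  | zero =>
    obtain ⟨i₀, hPi₀, hφi₀⟩ := hP v hv0
    exact ⟨fun _ => v, fun _ => i₀, rfl, fun _ => hv, by simp, fun _ => hφi₀, fun _ => hPi₀⟩
  | succ k ih =>
    obtain ⟨i₀, hPi₀, hφi₀⟩ := hP v hv0
    have : FiniteDimensional K W := .of_finrank_pos (by omega)
    have hW' : finrank K ↥(W ⊓ LinearMap.ker (φ i₀)) = k + 1 := by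
      have := Submodule.finrank_inf_ker_add_one hv hφi₀; omega
    obtain ⟨u, hu, hu0⟩ := Submodule.exists_mem_ne_zero_of_ne_bot
      (Submodule.one_le_finrank_iff.mp (by omega : 1 ≤ finrank K ↥(W ⊓ LinearMap.ker (φ i₀))))
    obtain ⟨f, I, -, hfW', htri, hdiag, hPf⟩ := ih hW' hu hu0
    refine ⟨Fin.cons v f, Fin.cons i₀ I, rfl, Fin.cases hv fun j => (hfW' j).1, ?_,
      Fin.cases hφi₀ hdiag, Fin.cases hPi₀ hPf⟩
    intro i j hij
    induction j using Fin.cases with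
    | zero => exact absurd hij (Fin.not_lt_zero _)
    | succ j =>
      induction i using Fin.cases with
      | zero => exact (hfW' j).2
      | succ i => exact htri i j (Fin.succ_lt_succ_iff.mp hij)

theorem linearIndependent_of_triangular {m : Type*} [Fintype m] [LinearOrder m]
    (φ : ι → Dual K V) (f : m → V) (I : m → ι) (htri : ∀ i j, i < j → φ (I i) (f j) = 0)
    (hdiag : ∀ j, φ (I j) (f j) ≠ 0) : LinearIndependent K f := by
  let M : Matrix m m K := Matrix.of fun i j => φ (I i) (f j)
  have hM : M.IsLowerTriangular := fun i j hij => htri i j hij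
  have hdet : M.det ≠ 0 := by
    rw [Matrix.det_of_isLowerTriangular M hM]
    exact Finset.prod_ne_zero_iff.mpr fun j _ => hdiag j
  exact LinearIndependent.of_comp (LinearMap.pi fun i => φ (I i))
    (Matrix.linearIndependent_cols_of_det_ne_zero hdet)

end Triangular

theorem stmt_5_general {K : Type*} [Field K] {n k : ℕ} (c : Fin (n+1) → ℤ)
    (W : Submodule K (MvPolynomial (Fin (n+1)) K))
    (hdim : Module.finrank K W = k + 1)
    (f₁ : MvPolynomial (Fin (n+1)) K) (hf₁ : f₁ ∈ W) (hne : f₁ ≠ 0) :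
    ∃ (f : Fin (k+1) → MvPolynomial (Fin (n+1)) K)
      (I : Fin (k+1) → (Fin (n+1) →₀ ℕ)),
      f 0 = f₁ ∧ (∀ j, f j ∈ W) ∧ LinearIndependent K f ∧
      Submodule.span K (Set.range f) = W ∧
      (∀ i j : Fin (k+1), i < j → MvPolynomial.coeff (I i) (f j) = 0) ∧
      (∀ j, MvPolynomial.coeff (I j) (f j) ≠ 0) ∧
      (∀ j, omega c (f j) = wt c (I j)) := by
  have hP : ∀ p ≠ 0, ∃ I, omega c p = wt c I ∧ lcoeff K I p ≠ 0 := fun p hp =>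
    (exists_mem_support_omega_eq c hp).imp fun I ⟨hI, hω⟩ => ⟨hω, mem_support_iff.mp hI⟩
  obtain ⟨f, I, hf0, hfW, htri, hdiag, hω⟩ :=
    exists_triangular_family (fun I => lcoeff K I) _ hP k hdim hf₁ hne
  have hli : LinearIndependent K f := linearIndependent_of_triangular _ f I htri hdiag
  have : FiniteDimensional K W := .of_finrank_pos (by omega)
  have hspan : Submodule.span K (Set.range f) = W :=
    Submodule.eq_of_le_of_finrank_eq (Submodule.span_le.mpr (Set.range_subset_iff.mpr hfW))
      (by rw [finrank_span_eq_card hli, Fintype.card_fin, hdim])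
  exact ⟨f, I, hf0, hfW, hli, hspan, htri, hdiag, hω⟩

/-- Any nonzero f₁ in a (k+1)-dimensional space W of degree-d forms extends to a basis
f₁,...,f_{k+1} of W admitting exponent tuples I₁,...,I_{k+1} with upper triangular
coefficient matrix (f^j_{I_i}) with nonzero diagonal and ω(f_j) = w(I_j) for all j. -/
theorem stmt_5 {K : Type*} [Field K] {n d k : ℕ} (c : Fin (n+1) → ℤ)
    (W : Submodule K (MvPolynomial (Fin (n+1)) K))
    (hW : ∀ p ∈ W, p.IsHomogeneous d)
    (hdim : Module.finrank K W = k + 1)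
    (f₁ : MvPolynomial (Fin (n+1)) K) (hf₁ : f₁ ∈ W) (hne : f₁ ≠ 0) :
    ∃ (f : Fin (k+1) → MvPolynomial (Fin (n+1)) K)
      (I : Fin (k+1) → (Fin (n+1) →₀ ℕ)),
      f 0 = f₁ ∧ (∀ j, f j ∈ W) ∧ LinearIndependent K f ∧
      Submodule.span K (Set.range f) = W ∧
      (∀ i j : Fin (k+1), i < j → MvPolynomial.coeff (I i) (f j) = 0) ∧
      (∀ j, MvPolynomial.coeff (I j) (f j) ≠ 0) ∧
      (∀ j, omega c (f j) = wt c (I j)) :=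
  stmt_5_general c W hdim f₁ hf₁ hne
end

section
/- A (k+1)-dimensional space W of degree-d forms in n+1 variables is GIT stable (resp. semistable) for the SL(n+1)-action if and only if for every choice of k+1 linearly independent elements f₁,...,f_{k+1} of W, the degree d(k+1) form f₁·f₂·…·f_{k+1} is GIT stable (resp. semistable) as a hypersurface. -/
/-!
For nonnegative weights `ω` is the weighted order of a polynomial, so it is additive on products
and `ω(g₁⋯g_{k+1}) = Σ ω(gⱼ)`. If `g` is a basis of `W`, every nonzero Plücker coordinate of `W`
at monomials `I` is a nonzero multiple of `det (coeff (Iᵢ) gⱼ)`; some term `∏ coeff (Iᵢ) g_{σ i}`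
of that determinant is nonzero, whence `Σ ω(gⱼ) ≤ Σ w(Iᵢ)` and `ω(∏ g) ≤ ω(W)`. Conversely, for
`I` realising `ω(W)` let `g` be the basis of `W` with `coeff (Iᵢ) gⱼ = δᵢⱼ`: exchanging `Iᵢ` for a
monomial of `gᵢ` of minimal weight keeps the Plücker coordinate nonzero, so minimality of `I`
forces `ω(gᵢ) ≥ w(Iᵢ)` and `ω(∏ g) = ω(W)`. Hence `ω(W, λ)` is the maximum of `ω(∏ g, λ)` over
bases of `W`, for every `λ`, which gives both equivalences.
-/

open MvPolynomial

/-- ω of a linear system given by generators f: the minimum of Σ_j w(I_j) over tuples of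
exponent vectors whose Plücker coordinate (coefficient determinant) is nonzero. -/
noncomputable def omegaW {K : Type*} [CommRing K] {n : ℕ} {ι : Type*} [Fintype ι]
    [DecidableEq ι] (c : Fin n → ℤ) (f : ι → MvPolynomial (Fin n) K) : ℤ :=
  sInf { s : ℤ | ∃ I : ι → (Fin n →₀ ℕ),
    (Matrix.of fun j i => MvPolynomial.coeff (I i) (f j)).det ≠ 0 ∧ s = ∑ j, wt c (I j) }


/-- A normalized one-parameter subgroup of SL(n+1): integer weights
a₀ ≥ a₁ ≥ ... ≥ aₙ with Σ aₗ = 0 and a₀ > 0. -/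
def Normalized {n : ℕ} (a : Fin (n+1) → ℤ) : Prop :=
  Antitone a ∧ (∑ l, a l) = 0 ∧ 0 < a 0

/-- The normalization factor A_λ = Σ_{l=0}^{n-1} (a_l - a_n). -/
def Aof {n : ℕ} (a : Fin (n+1) → ℤ) : ℤ :=
  ∑ l : Fin n, (a l.castSucc - a (Fin.last n))

/-- The shifted weights a_l - a_n used in the tilde weights. -/
def cOf {n : ℕ} (a : Fin (n+1) → ℤ) : Fin (n+1) → ℤ :=
  fun l => a l - a (Fin.last n)

/-- A degree-e form g in n+1 variables is GIT stable iff ω(g,λ)/A_λ < e/(n+1) for every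
normalized one-parameter subgroup λ. -/
def FormStable {K : Type*} [CommSemiring K] (n : ℕ) (e : ℚ)
    (g : MvPolynomial (Fin (n+1)) K) : Prop :=
  ∀ a : Fin (n+1) → ℤ, Normalized a →
    (omega (cOf a) g : ℚ) / (Aof a : ℚ) < e / (n + 1)

/-- A degree-e form g in n+1 variables is GIT semistable iff ω(g,λ)/A_λ ≤ e/(n+1) for every
normalized one-parameter subgroup λ. -/
def FormSemistable {K : Type*} [CommSemiring K] (n : ℕ) (e : ℚ)
    (g : MvPolynomial (Fin (n+1)) K) : Prop :=
  ∀ a : Fin (n+1) → ℤ, Normalized a →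
    (omega (cOf a) g : ℚ) / (Aof a : ℚ) ≤ e / (n + 1)

section Weight

variable {K : Type*} [CommSemiring K] {n : ℕ} {c : Fin n → ℤ}

theorem wt_nonneg (hc : ∀ l, 0 ≤ c l) (I : Fin n →₀ ℕ) : 0 ≤ wt c I :=
  Finset.sum_nonneg fun l _ => mul_nonneg (hc l) (Int.natCast_nonneg _)

theorem wt_eq_weight_toNat (hc : ∀ l, 0 ≤ c l) (I : Fin n →₀ ℕ) :
    wt c I = (Finsupp.weight (fun l => (c l).toNat) I : ℤ) := by
  simp [wt, Finsupp.weight_apply, Finsupp.sum_fintype, Int.toNat_of_nonneg (hc _), mul_comm]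

theorem omega_le_wt {p : MvPolynomial (Fin n) K} {J : Fin n →₀ ℕ} (hJ : J ∈ p.support) :
    omega c p ≤ wt c J := by
  obtain ⟨m, hm⟩ := Finset.min_of_mem (Finset.mem_image_of_mem (wt c) hJ)
  have := Finset.min_le (Finset.mem_image_of_mem (wt c) hJ)
  rw [hm, WithTop.coe_le_coe] at this
  simpa [omega, hm] using this

theorem exists_mem_support_wt_eq_omega {p : MvPolynomial (Fin n) K} (hp : p ≠ 0) :
    ∃ J ∈ p.support, wt c J = omega c p := by
  obtain ⟨m, hm⟩ := Finset.min_of_nonempty ((support_nonempty.2 hp).image (wt c))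
  obtain ⟨J, hJ, rfl⟩ := Finset.mem_image.1 (Finset.mem_of_min hm)
  exact ⟨J, hJ, by simp [omega, hm]⟩

theorem omega_eq_toNat_weightedOrder (hc : ∀ l, 0 ≤ c l) (p : MvPolynomial (Fin n) K) :
    omega c p = ((p : MvPowerSeries (Fin n) K).weightedOrder fun l => (c l).toNat).toNat := by
  rcases eq_or_ne p 0 with rfl | hp
  · simp [omega]
  obtain ⟨J, hJ, hwJ⟩ := exists_mem_support_wt_eq_omega (c := c) hp
  have : (p : MvPowerSeries (Fin n) K).weightedOrder (fun l => (c l).toNat) =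
      Finsupp.weight (fun l => (c l).toNat) J := by
    refine (MvPowerSeries.weightedOrder_eq_nat _).2 ⟨⟨J, by simpa using hJ, rfl⟩, fun E hE => ?_⟩
    by_contra hE'
    have := omega_le_wt (c := c) (mem_support_iff.2 (by simpa using hE'))
    rw [← hwJ, wt_eq_weight_toNat hc, wt_eq_weight_toNat hc] at this
    omega
  rw [this, ENat.toNat_natCast, ← hwJ, wt_eq_weight_toNat hc]

theorem omega_prod [NoZeroDivisors K] [Nontrivial K] (hc : ∀ l, 0 ≤ c l) {ι : Type*}
    (s : Finset ι) {g : ι → MvPolynomial (Fin n) K} (hg : ∀ j ∈ s, g j ≠ 0) :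
    omega c (∏ j ∈ s, g j) = ∑ j ∈ s, omega c (g j) := by
  have hcoe : ((∏ j ∈ s, g j : MvPolynomial (Fin n) K) : MvPowerSeries (Fin n) K) =
      ∏ j ∈ s, (g j : MvPowerSeries (Fin n) K) := map_prod coeToMvPowerSeries.ringHom g s
  simp only [omega_eq_toNat_weightedOrder hc, hcoe, MvPowerSeries.weightedOrder_prod]
  rw [ENat.toNat_sum fun j hj => by simpa using hg j hj]
  push_cast
  rfl

end Weight

section CoeffMatrix

variable {K σ ι : Type*}

/-- `(coeffMatrix f I).det` is the Plücker coordinate of `span f` at the monomials `I`. -/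
def coeffMatrix [CommSemiring K] (f : ι → MvPolynomial σ K) (I : ι → σ →₀ ℕ) : Matrix ι ι K :=
  Matrix.of fun j i => coeff (I i) (f j)

theorem coeffMatrix_update [CommSemiring K] [DecidableEq ι] (f : ι → MvPolynomial σ K)
    (I : ι → σ →₀ ℕ) (i : ι) (J : σ →₀ ℕ) :
    coeffMatrix f (Function.update I i J) =
      (coeffMatrix f I).updateCol i fun j => coeff J (f j) := by
  ext j i'
  rcases eq_or_ne i' i with rfl | hne <;> simp [coeffMatrix, *]

variable [Fintype ι]

theorem coeffMatrix_sum_smul [CommSemiring K] (C : Matrix ι ι K) (f : ι → MvPolynomial σ K)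
    (I : ι → σ →₀ ℕ) :
    coeffMatrix (fun j => ∑ m, C j m • f m) I = C * coeffMatrix f I := by
  ext j i
  simp [coeffMatrix, coeff_sum, Matrix.mul_apply]

variable [DecidableEq ι]

theorem linearIndependent_of_det_coeffMatrix_ne_zero [CommRing K] [IsDomain K]
    {f : ι → MvPolynomial σ K} {I : ι → σ →₀ ℕ} (hI : (coeffMatrix f I).det ≠ 0) :
    LinearIndependent K f := by
  refine Fintype.linearIndependent_iff.2 fun y hy => ?_
  refine congrFun (Matrix.eq_zero_of_vecMul_eq_zero hI (funext fun i => ?_))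
  simpa [Matrix.vecMul, dotProduct, coeffMatrix, coeff_sum] using congrArg (coeff (I i)) hy

theorem det_coeffMatrix_ne_zero_of_mem_span [CommRing K] {f g : ι → MvPolynomial σ K}
    (hfg : ∀ j, f j ∈ Submodule.span K (Set.range g)) {I : ι → σ →₀ ℕ}
    (hI : (coeffMatrix f I).det ≠ 0) : (coeffMatrix g I).det ≠ 0 := by
  choose C hC using fun j => (Submodule.mem_span_range_iff_exists_fun K).1 (hfg j)
  have hf : f = fun j => ∑ m, Matrix.of C j m • g m := funext fun j => (hC j).symm
  rw [hf, coeffMatrix_sum_smul, Matrix.det_mul] at hI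
  exact right_ne_zero_of_mul hI

theorem exists_det_coeffMatrix_ne_zero [Field K] {f : ι → MvPolynomial σ K}
    (hf : LinearIndependent K f) : ∃ I : ι → σ →₀ ℕ, (coeffMatrix f I).det ≠ 0 := by
  set col : (σ →₀ ℕ) → ι → K := fun E j => coeff E (f j)
  have hspan : Submodule.span K (Set.range col) = ⊤ := by
    rw [← Submodule.dualAnnihilator_eq_bot_iff, Submodule.eq_bot_iff]
    intro φ hφ
    rw [Submodule.mem_dualAnnihilator] at hφ
    have hy : ∑ j, φ (fun k => if j = k then 1 else 0) • f j = 0 := by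
      ext E
      have := hφ (col E) (Submodule.subset_span (Set.mem_range_self E))
      rw [LinearMap.pi_apply_eq_sum_univ] at this
      simpa [coeff_sum, col, mul_comm] using this
    have hφ0 := Fintype.linearIndependent_iff.1 hf _ hy
    exact LinearMap.ext fun x => by simp [LinearMap.pi_apply_eq_sum_univ φ x, hφ0]
  obtain ⟨κ, a, -, hspan', hli⟩ := exists_linearIndependent' K col
  let b : Module.Basis κ K (ι → K) := .mk hli (by rw [hspan', hspan])
  let e : ι ≃ κ := (Pi.basisFun K ι).indexEquiv b
  refine ⟨a ∘ e, ((Matrix.isUnit_iff_isUnit_det _).1 ?_).ne_zero⟩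
  exact Matrix.linearIndependent_cols_iff_isUnit.1 (hli.comp e e.injective)

end CoeffMatrix

theorem span_range_eq_of_linearIndependent {K V ι : Type*} [Field K] [Fintype ι] [AddCommGroup V]
    [Module K V] {f g : ι → V} (hf : LinearIndependent K f) (hg : LinearIndependent K g)
    (hgf : ∀ j, g j ∈ Submodule.span K (Set.range f)) :
    Submodule.span K (Set.range g) = Submodule.span K (Set.range f) :=
  have := FiniteDimensional.span_of_finite K (Set.finite_range f)
  Submodule.eq_of_le_of_finrank_eq (Submodule.span_le.2 (Set.range_subset_iff.2 hgf))
    (by rw [finrank_span_eq_card hg, finrank_span_eq_card hf])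

section OmegaW

variable {K : Type*} {n : ℕ} {ι : Type*} [Fintype ι] [DecidableEq ι] {c : Fin n → ℤ}

theorem sum_omega_le_sum_wt_of_det_ne_zero [CommRing K] {g : ι → MvPolynomial (Fin n) K}
    {I : ι → Fin n →₀ ℕ} (hI : (coeffMatrix g I).det ≠ 0) :
    ∑ j, omega c (g j) ≤ ∑ i, wt c (I i) := by
  rw [Matrix.det_apply] at hI
  obtain ⟨σ, -, hσ⟩ := Finset.exists_ne_zero_of_sum_ne_zero hI
  have hcoeff : ∀ i, coeff (I i) (g (σ i)) ≠ 0 := fun i h =>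
    hσ (by rw [Finset.prod_eq_zero (Finset.mem_univ i) h, smul_zero])
  calc ∑ j, omega c (g j) = ∑ i, omega c (g (σ i)) := (Equiv.sum_comp σ _).symm
    _ ≤ ∑ i, wt c (I i) := Finset.sum_le_sum fun i _ => omega_le_wt (mem_support_iff.2 (hcoeff i))

theorem omegaW_le [CommRing K] (hc : ∀ l, 0 ≤ c l) {f : ι → MvPolynomial (Fin n) K}
    {I : ι → Fin n →₀ ℕ} (hI : (coeffMatrix f I).det ≠ 0) :
    omegaW c f ≤ ∑ j, wt c (I j) :=
  csInf_le ⟨0, by rintro s ⟨I, -, rfl⟩; exact Finset.sum_nonneg fun j _ => wt_nonneg hc _⟩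
    ⟨I, hI, rfl⟩

variable [Field K]

theorem le_omegaW {f : ι → MvPolynomial (Fin n) K} (hf : LinearIndependent K f) {b : ℤ}
    (h : ∀ I : ι → Fin n →₀ ℕ, (coeffMatrix f I).det ≠ 0 → b ≤ ∑ j, wt c (I j)) :
    b ≤ omegaW c f := by
  obtain ⟨I, hI⟩ := exists_det_coeffMatrix_ne_zero hf
  exact le_csInf ⟨_, I, hI, rfl⟩ fun s ⟨I, hI, hs⟩ => hs ▸ h I hI

theorem exists_sum_wt_eq_omegaW (hc : ∀ l, 0 ≤ c l) {f : ι → MvPolynomial (Fin n) K}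
    (hf : LinearIndependent K f) :
    ∃ I : ι → Fin n →₀ ℕ, (coeffMatrix f I).det ≠ 0 ∧ ∑ j, wt c (I j) = omegaW c f := by
  obtain ⟨I, hI⟩ := exists_det_coeffMatrix_ne_zero hf
  have hmem : omegaW c f ∈ {s : ℤ | ∃ I : ι → Fin n →₀ ℕ,
      (coeffMatrix f I).det ≠ 0 ∧ s = ∑ j, wt c (I j)} :=
    Int.csInf_mem ⟨_, I, hI, rfl⟩
      ⟨0, by rintro s ⟨I, -, rfl⟩; exact Finset.sum_nonneg fun j _ => wt_nonneg hc _⟩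
  obtain ⟨I₀, hI₀, h⟩ := hmem
  exact ⟨I₀, hI₀, h.symm⟩

theorem sum_omega_le_omegaW {f g : ι → MvPolynomial (Fin n) K} (hf : LinearIndependent K f)
    (hg : LinearIndependent K g) (hgf : ∀ j, g j ∈ Submodule.span K (Set.range f)) :
    ∑ j, omega c (g j) ≤ omegaW c f := by
  have hfg : ∀ j, f j ∈ Submodule.span K (Set.range g) := fun j =>
    span_range_eq_of_linearIndependent hf hg hgf ▸ Submodule.subset_span ⟨j, rfl⟩
  exact le_omegaW hf fun I hI =>
    sum_omega_le_sum_wt_of_det_ne_zero (det_coeffMatrix_ne_zero_of_mem_span hfg hI)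

theorem exists_sum_omega_eq_omegaW (hc : ∀ l, 0 ≤ c l) {f : ι → MvPolynomial (Fin n) K}
    (hf : LinearIndependent K f) :
    ∃ g : ι → MvPolynomial (Fin n) K, (∀ j, g j ∈ Submodule.span K (Set.range f)) ∧
      LinearIndependent K g ∧ ∑ j, omega c (g j) = omegaW c f := by
  obtain ⟨I₀, hI₀, hsum⟩ := exists_sum_wt_eq_omegaW hc hf
  set M := coeffMatrix f I₀
  set g : ι → MvPolynomial (Fin n) K := fun i => ∑ m, M⁻¹ i m • f m
  have hgM : ∀ I, coeffMatrix g I = M⁻¹ * coeffMatrix f I := coeffMatrix_sum_smul _ f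
  have hg₀ : coeffMatrix g I₀ = 1 := by
    rw [hgM, Matrix.nonsing_inv_mul _ (isUnit_iff_ne_zero.2 hI₀)]
  have hg : LinearIndependent K g :=
    linearIndependent_of_det_coeffMatrix_ne_zero (I := I₀) (by simp [hg₀])
  have hgf : ∀ j, g j ∈ Submodule.span K (Set.range f) := fun j =>
    Submodule.sum_mem _ fun m _ => Submodule.smul_mem _ _ (Submodule.subset_span ⟨m, rfl⟩)
  refine ⟨g, hgf, hg, le_antisymm (sum_omega_le_omegaW hf hg hgf) ?_⟩
  rw [← hsum]
  refine Finset.sum_le_sum fun i _ => ?_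
  obtain ⟨J, hJ, hwJ⟩ := exists_mem_support_wt_eq_omega (c := c) (hg.ne_zero i)
  have hdet : (coeffMatrix f (Function.update I₀ i J)).det ≠ 0 := by
    have : (coeffMatrix g (Function.update I₀ i J)).det = coeff J (g i) := by
      rw [coeffMatrix_update, hg₀, ← Matrix.cramer_apply, Matrix.cramer_one]
      rfl
    rw [hgM, Matrix.det_mul] at this
    exact right_ne_zero_of_mul (this ▸ mem_support_iff.1 hJ)
  have hupd :
      ∑ j, wt c (Function.update I₀ i J j) + wt c (I₀ i) = ∑ j, wt c (I₀ j) + wt c J := by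
    simp only [Function.apply_update (fun _ => wt c), Finset.sum_update_of_mem (Finset.mem_univ i)]
    rw [← Finset.add_sum_erase _ _ (Finset.mem_univ i), Finset.sdiff_singleton_eq_erase]
    ring
  linarith [omegaW_le hc hdet]

theorem omega_prod_le_omegaW (hc : ∀ l, 0 ≤ c l) {f g : ι → MvPolynomial (Fin n) K}
    (hf : LinearIndependent K f) (hg : LinearIndependent K g)
    (hgf : ∀ j, g j ∈ Submodule.span K (Set.range f)) :
    omega c (∏ j, g j) ≤ omegaW c f := by
  rw [omega_prod hc _ fun j _ => hg.ne_zero j]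
  exact sum_omega_le_omegaW hf hg hgf

theorem exists_omega_prod_eq_omegaW (hc : ∀ l, 0 ≤ c l) {f : ι → MvPolynomial (Fin n) K}
    (hf : LinearIndependent K f) :
    ∃ g : ι → MvPolynomial (Fin n) K, (∀ j, g j ∈ Submodule.span K (Set.range f)) ∧
      LinearIndependent K g ∧ omega c (∏ j, g j) = omegaW c f := by
  obtain ⟨g, hgf, hg, hsum⟩ := exists_sum_omega_eq_omegaW hc hf
  exact ⟨g, hgf, hg, by rw [omega_prod hc _ fun j _ => hg.ne_zero j, hsum]⟩

end OmegaW

theorem cOf_nonneg {n : ℕ} {a : Fin (n+1) → ℤ} (ha : Antitone a) (l : Fin (n+1)) :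
    0 ≤ cOf a l :=
  sub_nonneg.2 (ha (Fin.le_last l))

theorem Aof_nonneg {n : ℕ} {a : Fin (n+1) → ℤ} (ha : Antitone a) : 0 ≤ Aof a :=
  Finset.sum_nonneg fun l _ => cOf_nonneg ha l.castSucc

theorem stmt_8_general {K : Type*} [Field K] {n d k : ℕ}
    (f : Fin (k+1) → MvPolynomial (Fin (n+1)) K)
    (hind : LinearIndependent K f) :
    ((∀ a : Fin (n+1) → ℤ, Normalized a →
        (omegaW (cOf a) f : ℚ) / (Aof a : ℚ) < (d * (k+1) : ℚ) / (n + 1)) ↔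
      (∀ g : Fin (k+1) → MvPolynomial (Fin (n+1)) K,
        (∀ j, g j ∈ Submodule.span K (Set.range f)) → LinearIndependent K g →
        FormStable n (d * (k+1) : ℚ) (∏ j, g j))) ∧
    ((∀ a : Fin (n+1) → ℤ, Normalized a →
        (omegaW (cOf a) f : ℚ) / (Aof a : ℚ) ≤ (d * (k+1) : ℚ) / (n + 1)) ↔
      (∀ g : Fin (k+1) → MvPolynomial (Fin (n+1)) K,
        (∀ j, g j ∈ Submodule.span K (Set.range f)) → LinearIndependent K g →
        FormSemistable n (d * (k+1) : ℚ) (∏ j, g j))) := by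
  have hle : ∀ a, Normalized a → ∀ g : Fin (k+1) → MvPolynomial (Fin (n+1)) K,
      (∀ j, g j ∈ Submodule.span K (Set.range f)) → LinearIndependent K g →
        (omega (cOf a) (∏ j, g j) : ℚ) / Aof a ≤ (omegaW (cOf a) f : ℚ) / Aof a :=
    fun a ha g hgf hg => div_le_div_of_nonneg_right
      (by exact_mod_cast omega_prod_le_omegaW (cOf_nonneg ha.1) hind hg hgf)
      (by exact_mod_cast Aof_nonneg ha.1)
  refine ⟨⟨fun hW g hgf hg a ha => (hle a ha g hgf hg).trans_lt (hW a ha), fun hG a ha => ?_⟩,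
    ⟨fun hW g hgf hg a ha => (hle a ha g hgf hg).trans (hW a ha), fun hG a ha => ?_⟩⟩ <;>
  · obtain ⟨g, hgf, hg, heq⟩ := exists_omega_prod_eq_omegaW (cOf_nonneg ha.1) hind
    simpa only [heq] using hG g hgf hg a ha

/-- Theorem 1.1: a (k+1)-dimensional linear system W (given by a basis f of degree-d forms)
is GIT stable (resp. semistable) iff for every choice of k+1 linearly independent elements
g₁,...,g_{k+1} of W the degree d(k+1) form g₁⋯g_{k+1} is GIT stable (resp. semistable). -/
theorem stmt_8 {K : Type*} [Field K] {n d k : ℕ}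
    (f : Fin (k+1) → MvPolynomial (Fin (n+1)) K)
    (hind : LinearIndependent K f) (hhom : ∀ j, (f j).IsHomogeneous d) :
    ((∀ a : Fin (n+1) → ℤ, Normalized a →
        (omegaW (cOf a) f : ℚ) / (Aof a : ℚ) < (d * (k+1) : ℚ) / (n + 1)) ↔
      (∀ g : Fin (k+1) → MvPolynomial (Fin (n+1)) K,
        (∀ j, g j ∈ Submodule.span K (Set.range f)) → LinearIndependent K g →
        FormStable n (d * (k+1) : ℚ) (∏ j, g j))) ∧
    ((∀ a : Fin (n+1) → ℤ, Normalized a →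
        (omegaW (cOf a) f : ℚ) / (Aof a : ℚ) ≤ (d * (k+1) : ℚ) / (n + 1)) ↔
      (∀ g : Fin (k+1) → MvPolynomial (Fin (n+1)) K,
        (∀ j, g j ∈ Submodule.span K (Set.range f)) → LinearIndependent K g →
        FormSemistable n (d * (k+1) : ℚ) (∏ j, g j))) :=
  stmt_8_general f hind
end

section
/- Let f₁, f₂, f₃ be quadratic forms in x₀,x₁,x₂ over a field with associated symmetric matrices A₁, A₂, A₃, and let Δ(λ,μ,ν) = det(λA₁ + μA₂ + νA₃) be the discriminant cubic. If f₃ = x₀x₁ (so A₃ is singular) and the point (0:0:1) is a common zero of f₁ and f₂, then Δ and both partial derivatives ∂Δ/∂λ, ∂Δ/∂μ vanish at (λ,μ,ν) = (0,0,1); i.e., the discriminant cubic is singular at (0:0:1). -/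
open MvPolynomial

/-- The quadratic form associated to a 3×3 matrix: f(x) = xᵀ A x. -/
noncomputable def toQuad {K : Type*} [CommRing K] (A : Matrix (Fin 3) (Fin 3) K) :
    MvPolynomial (Fin 3) K :=
  ∑ i, ∑ j, MvPolynomial.C (A i j) * MvPolynomial.X i * MvPolynomial.X j

/-- The discriminant cubic Δ(λ,μ,ν) = det(λA₁ + μA₂ + νA₃) of a net of conics, as a
polynomial in the variables λ = X 0, μ = X 1, ν = X 2. -/
noncomputable def discCubic {K : Type*} [CommRing K]
    (A₁ A₂ A₃ : Matrix (Fin 3) (Fin 3) K) : MvPolynomial (Fin 3) K :=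
  (Matrix.of fun i j =>
    MvPolynomial.C (A₁ i j) * X 0 + MvPolynomial.C (A₂ i j) * X 1 +
      MvPolynomial.C (A₃ i j) * X 2).det

/-!
At `(0,0,1)` the pencil `λA₁ + μA₂ + νA₃` is `A₃`, so `Δ(0,0,1) = det A₃` and, by Jacobi's formula,
`∂Δ/∂λ (0,0,1) = tr (adj A₃ · A₁)`, `∂Δ/∂μ (0,0,1) = tr (adj A₃ · A₂)`. Since `f₃ = x₀x₁`, the
symmetric matrix `A₃` has vanishing last row and column; hence `det A₃ = 0`, and `adj A₃` is
supported on the entry `(2,2)`, so both traces are multiples of `(A₁)₂₂ = f₁(0,0,1) = 0` and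
`(A₂)₂₂ = f₂(0,0,1) = 0`.
-/

open Matrix

section
variable {K : Type*} [CommRing K]

theorem eval_toQuad (A : Matrix (Fin 3) (Fin 3) K) (v : Fin 3 → K) :
    eval v (toQuad A) = v ⬝ᵥ A *ᵥ v := by
  simp only [toQuad, map_sum, map_mul, eval_C, eval_X, dotProduct, mulVec, Finset.mul_sum]
  exact Finset.sum_congr rfl fun _ _ => Finset.sum_congr rfl fun _ _ => by ring

theorem eval_toQuad_apply_two (A : Matrix (Fin 3) (Fin 3) K) :
    eval ![0, 0, 1] (toQuad A) = A 2 2 := by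
  simp [eval_toQuad, dotProduct, mulVec, Fin.sum_univ_three]

theorem Matrix.IsSymm.apply_two_eq_zero_of_toQuad_eq {A : Matrix (Fin 3) (Fin 3) K}
    (hA : A.IsSymm) (h : toQuad A = X 0 * X 1) (i : Fin 3) : A i 2 = 0 := by
  have hq (v : Fin 3 → K) : ∑ i, ∑ j, v i * A i j * v j = v 0 * v 1 := by
    simpa [eval_toQuad, dotProduct, mulVec, Finset.mul_sum, mul_assoc] using congrArg (eval v) h
  have h00 := hq ![1, 0, 0]
  have h11 := hq ![0, 1, 0]
  have h22 := hq ![0, 0, 1]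
  have h01 := hq ![1, 1, 0]
  have h02 := hq ![1, 0, 1]
  have h12 := hq ![0, 1, 1]
  simp only [Fin.sum_univ_three, cons_val, mul_zero, zero_mul, mul_one, one_mul, add_zero,
    zero_add] at h00 h11 h22 h01 h02 h12
  have two_mul01 : 2 * A 0 1 = 1 := by linear_combination h01 - h00 - h11 - hA.apply 0 1
  have two_mul02 : 2 * A 0 2 = 0 := by linear_combination h02 - h00 - h22 - hA.apply 0 2
  have two_mul12 : 2 * A 1 2 = 0 := by linear_combination h12 - h11 - h22 - hA.apply 1 2
  -- `2 * A 0 1 = 1` makes `2` invertible, so it cancels from `2 * A i 2 = 0`.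
  have h02' : A 0 2 = 0 := by linear_combination A 0 1 * two_mul02 - A 0 2 * two_mul01
  have h12' : A 1 2 = 0 := by linear_combination A 0 1 * two_mul12 - A 1 2 * two_mul01
  fin_cases i <;> assumption

theorem trace_adjugate_mul_eq_zero {A B : Matrix (Fin 3) (Fin 3) K} (hcol : ∀ i, A i 2 = 0)
    (hrow : ∀ j, A 2 j = 0) (hB : B 2 2 = 0) : (A.adjugate * B).trace = 0 := by
  simp only [trace, diag_apply, mul_apply, Fin.sum_univ_three]
  simp [adjugate_fin_three, hcol, hrow, hB]

variable (A₁ A₂ A₃ : Matrix (Fin 3) (Fin 3) K) (v : Fin 3 → K)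

theorem eval_discCubic :
    eval v (discCubic A₁ A₂ A₃) = (v 0 • A₁ + v 1 • A₂ + v 2 • A₃).det := by
  rw [discCubic, RingHom.map_det]
  congr 1
  ext i j
  simp [mul_comm]

theorem eval_pderiv_discCubic (k : Fin 3) :
    eval v (pderiv k (discCubic A₁ A₂ A₃)) =
      ((v 0 • A₁ + v 1 • A₂ + v 2 • A₃).adjugate * ![A₁, A₂, A₃] k).trace := by
  simp only [discCubic, trace, diag_apply, mul_apply, Fin.sum_univ_three, det_fin_three,
    adjugate_fin_three, of_apply, map_add, map_sub, Derivation.leibniz, pderiv_C, pderiv_X]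
  fin_cases k <;>
    simp only [Fin.zero_eta, Fin.mk_one, Fin.reduceFinMk, Pi.single_apply, Fin.reduceEq,
      ↓reduceIte, cons_val, smul_eq_mul, Matrix.add_apply, Matrix.smul_apply, eval_C, eval_X,
      map_add, map_mul, mul_one, mul_zero, add_zero, zero_add] <;>
    ring

end

theorem stmt_14_general {K : Type*} [Field K] (A₁ A₂ A₃ : Matrix (Fin 3) (Fin 3) K)
    (h₃ : A₃.IsSymm)
    (hA₃ : toQuad A₃ = X 0 * X 1)
    (hz₁ : MvPolynomial.eval (![0, 0, 1] : Fin 3 → K) (toQuad A₁) = 0)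
    (hz₂ : MvPolynomial.eval (![0, 0, 1] : Fin 3 → K) (toQuad A₂) = 0) :
    MvPolynomial.eval (![0, 0, 1] : Fin 3 → K) (discCubic A₁ A₂ A₃) = 0 ∧
    MvPolynomial.eval (![0, 0, 1] : Fin 3 → K)
      (MvPolynomial.pderiv 0 (discCubic A₁ A₂ A₃)) = 0 ∧
    MvPolynomial.eval (![0, 0, 1] : Fin 3 → K)
      (MvPolynomial.pderiv 1 (discCubic A₁ A₂ A₃)) = 0 := by
  have hcol : ∀ i, A₃ i 2 = 0 := h₃.apply_two_eq_zero_of_toQuad_eq hA₃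
  have hrow : ∀ j, A₃ 2 j = 0 := fun j => (h₃.apply j 2).trans (hcol j)
  rw [eval_toQuad_apply_two] at hz₁ hz₂
  simp only [eval_discCubic, eval_pderiv_discCubic, cons_val, zero_smul, one_smul, zero_add]
  exact ⟨det_eq_zero_of_column_eq_zero 2 hcol, trace_adjugate_mul_eq_zero hcol hrow hz₁,
    trace_adjugate_mul_eq_zero hcol hrow hz₂⟩

/-- If f₃ = x₀x₁ and (0:0:1) is a common zero of f₁ and f₂, then the discriminant cubic Δ
is singular at (0:0:1): Δ, ∂Δ/∂λ and ∂Δ/∂μ vanish there. -/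
theorem stmt_14 {K : Type*} [Field K] (A₁ A₂ A₃ : Matrix (Fin 3) (Fin 3) K)
    (h₁ : A₁.IsSymm) (h₂ : A₂.IsSymm) (h₃ : A₃.IsSymm)
    (hA₃ : toQuad A₃ = X 0 * X 1)
    (hz₁ : MvPolynomial.eval (![0, 0, 1] : Fin 3 → K) (toQuad A₁) = 0)
    (hz₂ : MvPolynomial.eval (![0, 0, 1] : Fin 3 → K) (toQuad A₂) = 0) :
    MvPolynomial.eval (![0, 0, 1] : Fin 3 → K) (discCubic A₁ A₂ A₃) = 0 ∧
    MvPolynomial.eval (![0, 0, 1] : Fin 3 → K)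
      (MvPolynomial.pderiv 0 (discCubic A₁ A₂ A₃)) = 0 ∧
    MvPolynomial.eval (![0, 0, 1] : Fin 3 → K)
      (MvPolynomial.pderiv 1 (discCubic A₁ A₂ A₃)) = 0 :=
  stmt_14_general A₁ A₂ A₃ h₃ hA₃ hz₁ hz₂
end

section
/- Let W be a (k+1)-dimensional space of degree-d forms with k > 1, defined over a field, and suppose stability is given by the Hilbert–Mumford numerical criterion via Plücker weights. If W contains a nonzero element f₀ that is GIT semistable as a hypersurface, and W is non-stable (resp. unstable), then there exists a k-dimensional subspace W' ⊂ W that is non-stable (resp. unstable). -/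
open MvPolynomial

/-!
Pick a monomial `x^J` of minimal `λ`-weight in the semistable form `f₀`, and let `W'` be the
hyperplane of `W` cut out by the vanishing of the `x^J`-coefficient. Any nonzero Plücker
coordinate of `W'`, extended by the column `J` and the generator `f₀`, gives a nonzero Plücker
coordinate of `W` (the matrix is block triangular), so `ω(W) ≤ ω(f₀) + ω(W')`. Semistability
bounds `ω(f₀)/A_λ` by `d/(n+1)`, which transfers the (non-)stability inequality from `W` to `W'`.
-/

section Weights

variable {R : Type*} [CommSemiring R] {n : ℕ}

lemma omega_le_wt_s17 (c : Fin n → ℤ) {f : MvPolynomial (Fin n) R}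
    {I : Fin n →₀ ℕ} (h : coeff I f ≠ 0) : omega c f ≤ wt c I := by
  have hmem : wt c I ∈ f.support.image (wt c) :=
    Finset.mem_image_of_mem _ (mem_support_iff.mpr h)
  obtain ⟨b, hb⟩ := Finset.min_of_mem hmem
  have hle : (b : WithTop ℤ) ≤ wt c I := hb ▸ Finset.min_le hmem
  rw [omega, hb, WithTop.untopD_coe]
  exact_mod_cast hle

lemma exists_coeff_ne_zero_wt_eq_omega (c : Fin n → ℤ)
    {f : MvPolynomial (Fin n) R} (hf : f ≠ 0) :
    ∃ J, coeff J f ≠ 0 ∧ wt c J = omega c f := by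
  obtain ⟨b, hb⟩ := Finset.min_of_nonempty ((support_nonempty.mpr hf).image (wt c))
  obtain ⟨J, hJ, hwt⟩ := Finset.mem_image.mp (Finset.mem_of_min hb)
  exact ⟨J, mem_support_iff.mp hJ, by rw [hwt, omega, hb, WithTop.untopD_coe]⟩

end Weights

section Plucker

variable {R σ ι : Type*} [CommRing R] [Fintype ι] [DecidableEq ι]

noncomputable def pluckerCoord (f : ι → MvPolynomial σ R) (I : ι → σ →₀ ℕ) : R :=
  (Matrix.of fun j i => coeff (I i) (f j)).det

lemma pluckerCoord_ne_zero_of_mem_span {f G : ι → MvPolynomial σ R}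
    (hG : ∀ j, G j ∈ Submodule.span R (Set.range f)) {I : ι → σ →₀ ℕ}
    (h : pluckerCoord G I ≠ 0) : pluckerCoord f I ≠ 0 := by
  choose P hP using fun j => (Submodule.mem_span_range_iff_exists_fun R).mp (hG j)
  have hmul : (Matrix.of fun j i => coeff (I i) (G j)) =
      Matrix.of P * Matrix.of fun j i => coeff (I i) (f j) := by
    ext j i
    simp only [Matrix.mul_apply, Matrix.of_apply, ← hP j, coeff_sum, coeff_smul, smul_eq_mul]
  intro h0
  exact h (by rw [pluckerCoord, hmul, Matrix.det_mul, ← pluckerCoord, h0, mul_zero])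

lemma pluckerCoord_cons {m : ℕ} (p : MvPolynomial σ R) (h : Fin m → MvPolynomial σ R)
    (J : σ →₀ ℕ) (I : Fin m → σ →₀ ℕ) (hzero : ∀ j, coeff J (h j) = 0) :
    pluckerCoord (Fin.cons p h : Fin (m + 1) → _) (Fin.cons J I) =
      coeff J p * pluckerCoord h I := by
  rw [pluckerCoord, Matrix.det_succ_column_zero, Fin.sum_univ_succ]
  simp [hzero, pluckerCoord, Matrix.submatrix]

lemma sum_omega_le_sum_wt {n : ℕ} (c : Fin n → ℤ) {f : ι → MvPolynomial (Fin n) R}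
    {I : ι → Fin n →₀ ℕ} (h : pluckerCoord f I ≠ 0) :
    ∑ j, omega c (f j) ≤ ∑ j, wt c (I j) := by
  rw [pluckerCoord, Matrix.det_apply] at h
  obtain ⟨τ, -, hτ⟩ := Finset.exists_ne_zero_of_sum_ne_zero h
  have hcoeff : ∀ i, coeff (I i) (f (τ i)) ≠ 0 := fun i h0 =>
    hτ (by simp only [Matrix.of_apply]; rw [Finset.prod_eq_zero (Finset.mem_univ i) h0, smul_zero])
  calc ∑ j, omega c (f j) = ∑ i, omega c (f (τ i)) := (Equiv.sum_comp τ _).symm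
    _ ≤ ∑ i, wt c (I i) := Finset.sum_le_sum fun i _ => omega_le_wt_s17 c (hcoeff i)

lemma omegaW_eq_sInf {n : ℕ} (c : Fin n → ℤ) (f : ι → MvPolynomial (Fin n) R) :
    omegaW c f = sInf {s | ∃ I, pluckerCoord f I ≠ 0 ∧ s = ∑ j, wt c (I j)} :=
  rfl

lemma omegaW_le_sum_wt {n : ℕ} (c : Fin n → ℤ) {f : ι → MvPolynomial (Fin n) R}
    {I : ι → Fin n →₀ ℕ} (h : pluckerCoord f I ≠ 0) : omegaW c f ≤ ∑ j, wt c (I j) := by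
  rw [omegaW_eq_sInf]
  refine csInf_le ⟨∑ j, omega c (f j), ?_⟩ ⟨I, h, rfl⟩
  rintro s ⟨I', hI', rfl⟩
  exact sum_omega_le_sum_wt c hI'

end Plucker

lemma Module.Dual.exists_linearIndependent_ker {K V : Type*} [Field K] [AddCommGroup V]
    [Module K V] {m : ℕ} (W : Submodule K V) (hW : Module.finrank K W = m + 1)
    (φ : Module.Dual K V) {p : V} (hp : p ∈ W) (hφp : φ p ≠ 0) :
    ∃ g : Fin m → V, (∀ j, g j ∈ W) ∧ LinearIndependent K g ∧ ∀ j, φ (g j) = 0 := by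
  have : FiniteDimensional K W := Module.finite_of_finrank_eq_succ hW
  set ψ : Module.Dual K W := φ.domRestrict W
  have hψ : ψ ≠ 0 := fun h0 => hφp (by simpa [ψ] using LinearMap.congr_fun h0 ⟨p, hp⟩)
  have hker : Module.finrank K (LinearMap.ker ψ) = m := by
    have := Module.Dual.finrank_ker_add_one_of_ne_zero hψ
    omega
  let b := Module.finBasisOfFinrankEq K _ hker
  refine ⟨fun j => (b j : W), fun j => (b j : W).2, ?_, fun j => (b j).2⟩
  exact b.linearIndependent.map' (W.subtype ∘ₗ (LinearMap.ker ψ).subtype)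
    (LinearMap.ker_eq_bot.mpr (Subtype.val_injective.comp Subtype.val_injective))

section Field

variable {K σ : Type*} [Field K]

lemma exists_linearIndependent_coeff_eq_zero {m : ℕ} (W : Submodule K (MvPolynomial σ K))
    (hW : Module.finrank K W = m + 1) {p : MvPolynomial σ K} (hp : p ∈ W) {J : σ →₀ ℕ}
    (hJ : coeff J p ≠ 0) :
    ∃ g : Fin m → MvPolynomial σ K, (∀ j, g j ∈ W) ∧ LinearIndependent K g ∧
      ∀ j, coeff J (g j) = 0 :=
  Module.Dual.exists_linearIndependent_ker W hW (lcoeff K J) hp hJ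

lemma exists_pluckerCoord_ne_zero {m : ℕ} (g : Fin m → MvPolynomial σ K)
    (hg : LinearIndependent K g) : ∃ I, pluckerCoord g I ≠ 0 := by
  induction m with
  | zero => exact ⟨Fin.elim0, by simp [pluckerCoord]⟩
  | succ m ih =>
    obtain ⟨J, hJ⟩ := ne_zero_iff.mp (hg.ne_zero 0)
    obtain ⟨h, hmem, hli, hzero⟩ := exists_linearIndependent_coeff_eq_zero _
      (by simpa using finrank_span_eq_card hg) (Submodule.subset_span (Set.mem_range_self 0)) hJ
    obtain ⟨I, hI⟩ := ih h hli
    refine ⟨Fin.cons J I, pluckerCoord_ne_zero_of_mem_span (G := Fin.cons (g 0) h) ?_ ?_⟩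
    · exact Fin.cases (Submodule.subset_span (Set.mem_range_self 0)) hmem
    · rw [pluckerCoord_cons _ _ _ _ hzero]
      exact mul_ne_zero hJ hI

lemma exists_linearIndependent_omegaW_le_omega_add {n k : ℕ} (c : Fin n → ℤ)
    {f : Fin (k + 1) → MvPolynomial (Fin n) K} (hind : LinearIndependent K f)
    {f₀ : MvPolynomial (Fin n) K} (hf₀W : f₀ ∈ Submodule.span K (Set.range f)) (hf₀ : f₀ ≠ 0) :
    ∃ g : Fin k → MvPolynomial (Fin n) K,
      (∀ j, g j ∈ Submodule.span K (Set.range f)) ∧ LinearIndependent K g ∧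
      omegaW c f ≤ omega c f₀ + omegaW c g := by
  obtain ⟨J, hJ, hwt⟩ := exists_coeff_ne_zero_wt_eq_omega c hf₀
  obtain ⟨g, hmem, hli, hzero⟩ := exists_linearIndependent_coeff_eq_zero _
    (by simpa using finrank_span_eq_card hind) hf₀W hJ
  refine ⟨g, hmem, hli, ?_⟩
  suffices omegaW c f - omega c f₀ ≤ omegaW c g by omega
  obtain ⟨I₀, hI₀⟩ := exists_pluckerCoord_ne_zero g hli
  rw [omegaW_eq_sInf c g]
  refine le_csInf ⟨_, I₀, hI₀, rfl⟩ ?_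
  rintro s ⟨I, hI, rfl⟩
  have hfI : pluckerCoord f (Fin.cons J I) ≠ 0 := by
    refine pluckerCoord_ne_zero_of_mem_span (G := Fin.cons f₀ g) (Fin.cases hf₀W hmem) ?_
    rw [pluckerCoord_cons _ _ _ _ hzero]
    exact mul_ne_zero hJ hI
  have := omegaW_le_sum_wt c hfI
  rw [Fin.sum_univ_succ, Fin.cons_zero, hwt] at this
  simp only [Fin.cons_succ] at this
  omega

end Field

lemma Aof_pos {n : ℕ} {a : Fin (n + 1) → ℤ} (h : Normalized a) : 0 < Aof a := by
  obtain ⟨hmono, hsum, hpos⟩ := h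
  have hA : Aof a = ∑ l, (a l - a (Fin.last n)) := by
    rw [Aof, Fin.sum_univ_castSucc, sub_self, add_zero]
  have hA_eq : Aof a = -((n + 1) * a (Fin.last n)) := by
    simp [hA, Finset.sum_sub_distrib, hsum]
  have hA_ge : a 0 - a (Fin.last n) ≤ Aof a := hA ▸
    Finset.single_le_sum (fun l _ => sub_nonneg.2 (hmono (Fin.le_last l))) (Finset.mem_univ 0)
  -- together: `n * (-a last) ≥ a 0 > 0`, so `a last < 0`
  nlinarith

theorem stmt_17_general {K : Type*} [Field K] {n d k : ℕ}
    (f : Fin (k+1) → MvPolynomial (Fin (n+1)) K)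
    (hind : LinearIndependent K f)
    (f₀ : MvPolynomial (Fin (n+1)) K) (hf₀W : f₀ ∈ Submodule.span K (Set.range f))
    (hf₀ : f₀ ≠ 0) (hss : FormSemistable n (d : ℚ) f₀) :
    ((∃ a : Fin (n+1) → ℤ, Normalized a ∧
        (d * (k+1) : ℚ) / (n + 1) ≤ (omegaW (cOf a) f : ℚ) / (Aof a : ℚ)) →
      ∃ g : Fin k → MvPolynomial (Fin (n+1)) K,
        (∀ j, g j ∈ Submodule.span K (Set.range f)) ∧ LinearIndependent K g ∧
        ∃ a : Fin (n+1) → ℤ, Normalized a ∧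
          (d * k : ℚ) / (n + 1) ≤ (omegaW (cOf a) g : ℚ) / (Aof a : ℚ)) ∧
    ((∃ a : Fin (n+1) → ℤ, Normalized a ∧
        (d * (k+1) : ℚ) / (n + 1) < (omegaW (cOf a) f : ℚ) / (Aof a : ℚ)) →
      ∃ g : Fin k → MvPolynomial (Fin (n+1)) K,
        (∀ j, g j ∈ Submodule.span K (Set.range f)) ∧ LinearIndependent K g ∧
        ∃ a : Fin (n+1) → ℤ, Normalized a ∧
          (d * k : ℚ) / (n + 1) < (omegaW (cOf a) g : ℚ) / (Aof a : ℚ)) := by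
  have key : ∀ a, Normalized a → ∃ g : Fin k → MvPolynomial (Fin (n+1)) K,
      (∀ j, g j ∈ Submodule.span K (Set.range f)) ∧ LinearIndependent K g ∧
      (omegaW (cOf a) f : ℚ) / Aof a - d / (n + 1) ≤ (omegaW (cOf a) g : ℚ) / Aof a := by
    intro a ha
    obtain ⟨g, hmem, hli, hle⟩ :=
      exists_linearIndependent_omegaW_le_omega_add (cOf a) hind hf₀W hf₀
    refine ⟨g, hmem, hli, ?_⟩
    have hA : (0 : ℚ) < Aof a := by exact_mod_cast Aof_pos ha
    have hleQ : (omegaW (cOf a) f : ℚ) ≤ omega (cOf a) f₀ + omegaW (cOf a) g := by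
      exact_mod_cast hle
    have hdiv := div_le_div_of_nonneg_right hleQ hA.le
    rw [add_div] at hdiv
    linarith [hss a ha]
  have hsplit : (d * (k + 1) : ℚ) / (n + 1) = d * k / (n + 1) + d / (n + 1) := by ring
  constructor
  · rintro ⟨a, ha, hns⟩
    obtain ⟨g, hmem, hli, hle⟩ := key a ha
    exact ⟨g, hmem, hli, a, ha, by linarith⟩
  · rintro ⟨a, ha, hus⟩
    obtain ⟨g, hmem, hli, hle⟩ := key a ha
    exact ⟨g, hmem, hli, a, ha, by linarith⟩

/-- If a (k+1)-dimensional system W (k > 1) of degree-d forms contains a nonzero GIT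
semistable form and is non-stable (resp. unstable), then it has a k-dimensional
subsystem which is non-stable (resp. unstable). -/
theorem stmt_17 {K : Type*} [Field K] {n d k : ℕ} (hk : 1 < k)
    (f : Fin (k+1) → MvPolynomial (Fin (n+1)) K)
    (hind : LinearIndependent K f) (hhom : ∀ j, (f j).IsHomogeneous d)
    (f₀ : MvPolynomial (Fin (n+1)) K) (hf₀W : f₀ ∈ Submodule.span K (Set.range f))
    (hf₀ : f₀ ≠ 0) (hss : FormSemistable n (d : ℚ) f₀) :
    ((∃ a : Fin (n+1) → ℤ, Normalized a ∧
        (d * (k+1) : ℚ) / (n + 1) ≤ (omegaW (cOf a) f : ℚ) / (Aof a : ℚ)) →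
      ∃ g : Fin k → MvPolynomial (Fin (n+1)) K,
        (∀ j, g j ∈ Submodule.span K (Set.range f)) ∧ LinearIndependent K g ∧
        ∃ a : Fin (n+1) → ℤ, Normalized a ∧
          (d * k : ℚ) / (n + 1) ≤ (omegaW (cOf a) g : ℚ) / (Aof a : ℚ)) ∧
    ((∃ a : Fin (n+1) → ℤ, Normalized a ∧
        (d * (k+1) : ℚ) / (n + 1) < (omegaW (cOf a) f : ℚ) / (Aof a : ℚ)) →
      ∃ g : Fin k → MvPolynomial (Fin (n+1)) K,
        (∀ j, g j ∈ Submodule.span K (Set.range f)) ∧ LinearIndependent K g ∧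
        ∃ a : Fin (n+1) → ℤ, Normalized a ∧
          (d * k : ℚ) / (n + 1) < (omegaW (cOf a) g : ℚ) / (Aof a : ℚ)) :=
  stmt_17_general f hind f₀ hf₀W hf₀ hss
end
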